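/- In the group SO(3,ℝ), let g = diag(-1, 1, -1) and for θ ∈ ℝ let a_θ be the rotation by angle θ about the z-axis. Then for every positive integer n, the iterated commutator [a_θ, ₙg] equals a_{(-2)^n θ}. -/

import Mathlib

/-- The left-normed iterated commutator `[x, ₙg]`: `engel g x 0 = x` and
`engel g x (n+1) = [engel g x n, g] = (engel g x n)⁻¹ * g⁻¹ * (engel g x n) * g`. -/
def engel {G : Type*} [Group G] (g x : G) : ℕ → G
  | 0 => x
  | n + 1 => (engel g x n)⁻¹ * g⁻¹ * engel g x n * g

/-- `E` is an Engel sink of `g`: for every `x` all sufficiently long commutators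
`[x, ₙg]` lie in `E`. -/
def IsEngelSink {G : Type*} [Group G] (g : G) (E : Set G) : Prop :=
  ∀ x : G, ∃ N : ℕ, ∀ n : ℕ, N ≤ n → engel g x n ∈ E

/-- `SO(3,ℝ)`: the subgroup of the orthogonal group `O(3,ℝ)` of matrices of determinant 1. -/
def SO3 : Subgroup (Matrix.orthogonalGroup (Fin 3) ℝ) where
  carrier := {A | (A : Matrix (Fin 3) (Fin 3) ℝ).det = 1}
  one_mem' := by simp
  mul_mem' := by
    intro A B hA hB
    simp only [Set.mem_setOf_eq, Matrix.UnitaryGroup.mul_val, Matrix.det_mul] at *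
    rw [hA, hB, one_mul]
  inv_mem' := by
    intro A hA
    simp only [Set.mem_setOf_eq] at *
    rw [Matrix.UnitaryGroup.inv_val, Matrix.star_eq_conjTranspose,
      Matrix.det_conjTranspose, hA, star_one]

/-!
Conjugation by `g` inverts `x = a θ` and hence every power of `x`, so on powers of `x` the
commutator with `g` is `y ↦ y⁻¹ * (g⁻¹ * y * g) = y⁻²`. Iterating gives
`[a θ, ₙg] = (a θ) ^ (-2)ⁿ = a ((-2)ⁿ θ)`.
-/

section Inverting

variable {G : Type*} [Group G] {g x : G}

theorem conj_zpow_eq_inv (h : g⁻¹ * x * g = x⁻¹) (k : ℤ) : g⁻¹ * x ^ k * g = (x ^ k)⁻¹ := by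
  simpa [h, inv_zpow] using (conj_zpow (a := g⁻¹) (b := x) (i := k)).symm

theorem engel_eq_zpow_of_conj_eq_inv (h : g⁻¹ * x * g = x⁻¹) (n : ℕ) :
    engel g x n = x ^ ((-2 : ℤ) ^ n) := by
  induction n with
  | zero => simp [engel]
  | succ n ih =>
    calc engel g x (n + 1) = (x ^ (-2 : ℤ) ^ n)⁻¹ * (g⁻¹ * x ^ (-2 : ℤ) ^ n * g) := by
          rw [engel, ih]; group
      _ = x ^ ((-2 : ℤ) ^ (n + 1)) := by
          rw [conj_zpow_eq_inv h, ← zpow_neg, ← zpow_add, pow_succ]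
          ring_nf

end Inverting

theorem zpow_eq_of_map_add {G : Type*} [Group G] {a : ℝ → G}
    (hadd : ∀ φ ψ, a (φ + ψ) = a φ * a ψ) (θ : ℝ) (k : ℤ) : a θ ^ k = a (k * θ) := by
  let ρ : Multiplicative ℝ →* G := MonoidHom.mk' (fun t => a t.toAdd) fun s t => hadd _ _
  have h := map_zpow ρ (Multiplicative.ofAdd θ) k
  rw [← ofAdd_zsmul, zsmul_eq_mul] at h
  exact h.symm

theorem SO3.val_val_injective :
    Function.Injective
      fun x : SO3 => ((x : Matrix.orthogonalGroup (Fin 3) ℝ) : Matrix (Fin 3) (Fin 3) ℝ) :=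
  Subtype.val_injective.comp Subtype.val_injective

theorem SO3.rotation_add {a : ℝ → SO3}
    (ha : ∀ θ : ℝ, ((a θ : Matrix.orthogonalGroup (Fin 3) ℝ) : Matrix (Fin 3) (Fin 3) ℝ)
      = !![Real.cos θ, Real.sin θ, 0; -Real.sin θ, Real.cos θ, 0; 0, 0, 1])
    (φ ψ : ℝ) : a (φ + ψ) = a φ * a ψ := by
  apply SO3.val_val_injective
  simp only [Subgroup.coe_mul, Matrix.UnitaryGroup.mul_val, ha, Matrix.mul_fin_three,
    Real.cos_add, Real.sin_add]
  ext i j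
  fin_cases i <;> fin_cases j <;> simp <;> ring

theorem SO3.conj_rotation_eq_inv {a : ℝ → SO3} {g : SO3}
    (ha : ∀ θ : ℝ, ((a θ : Matrix.orthogonalGroup (Fin 3) ℝ) : Matrix (Fin 3) (Fin 3) ℝ)
      = !![Real.cos θ, Real.sin θ, 0; -Real.sin θ, Real.cos θ, 0; 0, 0, 1])
    (hg : ((g : Matrix.orthogonalGroup (Fin 3) ℝ) : Matrix (Fin 3) (Fin 3) ℝ)
      = !![-1, 0, 0; 0, 1, 0; 0, 0, -1])
    (θ : ℝ) : g⁻¹ * a θ * g = (a θ)⁻¹ := by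
  -- the same identity, in a form that needs no inverses in `SO3`
  have hsandwich : a θ * g * a θ = g := by
    apply SO3.val_val_injective
    simp only [Subgroup.coe_mul, Matrix.UnitaryGroup.mul_val, ha, hg, Matrix.mul_fin_three]
    ext i j
    fin_cases i <;> fin_cases j <;> simp <;> nlinarith [Real.sin_sq_add_cos_sq θ]
  rw [eq_inv_iff_mul_eq_one, mul_assoc, mul_assoc, ← mul_assoc (a θ), hsandwich, inv_mul_cancel]

/-- In `SO(3,ℝ)`, let `g = diag(-1,1,-1)` and let `a θ` be the rotation by angle `θ` about
the `z`-axis.  Then `[a θ, ₙg] = a ((-2)^n θ)` for every `n ≥ 1`. -/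
theorem so3_iterated_commutator_rotation
    (a : ℝ → SO3) (g : SO3)
    (ha : ∀ θ : ℝ, ((a θ : Matrix.orthogonalGroup (Fin 3) ℝ) : Matrix (Fin 3) (Fin 3) ℝ)
      = !![Real.cos θ, Real.sin θ, 0; -Real.sin θ, Real.cos θ, 0; 0, 0, 1])
    (hg : ((g : Matrix.orthogonalGroup (Fin 3) ℝ) : Matrix (Fin 3) (Fin 3) ℝ)
      = !![-1, 0, 0; 0, 1, 0; 0, 0, -1]) :
    ∀ (n : ℕ), 1 ≤ n → ∀ θ : ℝ, engel g (a θ) n = a ((-2 : ℝ) ^ n * θ) := by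
  intro n _ θ
  rw [engel_eq_zpow_of_conj_eq_inv (SO3.conj_rotation_eq_inv ha hg θ),
    zpow_eq_of_map_add (SO3.rotation_add ha)]
  norm_num
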